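/- Let H have compact SVD H = U₁ΣV₁ᵀ and let a be a vector with m = U₁ᵀa, p = a − U₁m, and suppose p ≠ 0. Set P = p/‖p‖₂. Then [H a] = [U₁ P] · K · W, where K = [[Σ, m],[0, ‖p‖₂]] and W is the block matrix [[V₁ᵀ, 0],[0, 1]] appropriately arranged, and [U₁ P] has orthonormal columns. -/

import Mathlib

/-!
Since `U₁ᵀ U₁ = 1`, the residual `p = a - U₁ U₁ᵀ a` satisfies `U₁ᵀ p = 0`, so the unit vector
`P = p / ‖p‖` completes the columns of `U₁` to an orthonormal family. Multiplying out the block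
matrices gives `[U₁ P] K W = [U₁ Σ V₁ᵀ | U₁ m + ‖p‖ P] = [H | a]`.
-/

open Matrix

def colVec {m : ℕ} (v : Fin m → ℝ) : Matrix (Fin m) Unit ℝ :=
  Matrix.of fun i _ => v i

namespace Matrix

theorem transpose_mulVec_sub_mulVec_transpose_mulVec {R m r : Type*} [Ring R] [Fintype m]
    [Fintype r] [DecidableEq r] {U : Matrix m r R} (hU : Uᵀ * U = 1) (a : m → R) :
    Uᵀ *ᵥ (a - U *ᵥ (Uᵀ *ᵥ a)) = 0 := by
  rw [mulVec_sub, mulVec_mulVec, hU, one_mulVec, sub_self]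

theorem transpose_fromCols_mul_fromCols_eq_one {R m r n : Type*} [CommSemiring R] [Fintype m]
    [DecidableEq r] [DecidableEq n] {A : Matrix m r R} {B : Matrix m n R}
    (hA : Aᵀ * A = 1) (hAB : Aᵀ * B = 0) (hB : Bᵀ * B = 1) :
    (fromCols A B)ᵀ * fromCols A B = 1 := by
  have hBA : Bᵀ * A = 0 := by
    rw [← transpose_transpose (Bᵀ * A), transpose_mul, transpose_transpose, hAB, transpose_zero]
  rw [transpose_fromCols, fromRows_mul_fromCols, hA, hAB, hBA, hB, fromBlocks_one]

theorem fromCols_replicateCol_mul_fromBlocks_mul_fromBlocks {R m r n ι : Type*} [CommSemiring R]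
    [Fintype r] [Unique ι] [DecidableEq ι]
    (U : Matrix m r R) (P : m → R) (S : Matrix r r R) (x : r → R) (c : R) (W : Matrix r n R) :
    fromCols U (replicateCol ι P) * fromBlocks S (replicateCol ι x) 0 (of fun _ _ => c : Matrix ι ι R) *
        fromBlocks W 0 0 (1 : Matrix ι ι R) =
      fromCols (U * S * W) (replicateCol ι (U *ᵥ x + c • P)) := by
  rw [fromCols_mul_fromBlocks, fromCols_mul_fromBlocks]
  congr 1
  · simp
  · ext i j
    simp [mul_apply, replicateCol, mulVec, dotProduct, mul_comm]

theorem dotProduct_self_pos_of_ne_zero {m : Type*} [Fintype m] {p : m → ℝ} (hp : p ≠ 0) :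
    0 < p ⬝ᵥ p := by
  simpa using dotProduct_star_self_pos_iff.mpr hp

theorem dotProduct_inv_sqrt_smul_self {m : Type*} [Fintype m] {p : m → ℝ} (hp : p ≠ 0) :
    ((√(p ⬝ᵥ p))⁻¹ • p) ⬝ᵥ ((√(p ⬝ᵥ p))⁻¹ • p) = 1 := by
  have hpos := dotProduct_self_pos_of_ne_zero hp
  rw [smul_dotProduct, dotProduct_smul, smul_eq_mul, smul_eq_mul, ← mul_assoc, ← mul_inv,
    Real.mul_self_sqrt hpos.le, inv_mul_cancel₀ hpos.ne']

theorem sqrt_dotProduct_self_smul_inv_smul {m : Type*} [Fintype m] {p : m → ℝ} (hp : p ≠ 0) :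
    √(p ⬝ᵥ p) • ((√(p ⬝ᵥ p))⁻¹ • p) = p :=
  smul_inv_smul₀ (Real.sqrt_pos.mpr (dotProduct_self_pos_of_ne_zero hp)).ne' p

end Matrix

theorem colVec_eq_replicateCol {m : ℕ} (v : Fin m → ℝ) : colVec v = replicateCol Unit v := rfl

theorem svd_append_col_factorization_general {m n r : ℕ}
    (H : Matrix (Fin m) (Fin n) ℝ)
    (U₁ : Matrix (Fin m) (Fin r) ℝ) (S : Matrix (Fin r) (Fin r) ℝ)
    (V₁ : Matrix (Fin n) (Fin r) ℝ)
    (hU : U₁ᵀ * U₁ = 1)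
    (hH : H = U₁ * S * V₁ᵀ)
    (a : Fin m → ℝ) (mm : Fin r → ℝ) (p : Fin m → ℝ) (P : Fin m → ℝ)
    (hmm : mm = U₁ᵀ *ᵥ a) (hp : p = a - U₁ *ᵥ mm) (hp0 : p ≠ 0)
    (hPdef : P = (Real.sqrt (p ⬝ᵥ p))⁻¹ • p) :
    Matrix.fromCols H (colVec a) =
      Matrix.fromCols U₁ (colVec P) *
        fromBlocks S (colVec mm) 0 (Matrix.of fun _ _ => Real.sqrt (p ⬝ᵥ p) : Matrix Unit Unit ℝ) *
        fromBlocks V₁ᵀ 0 0 (1 : Matrix Unit Unit ℝ) ∧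
    (Matrix.fromCols U₁ (colVec P))ᵀ * Matrix.fromCols U₁ (colVec P) = 1 := by
  have hUp : U₁ᵀ *ᵥ p = 0 := by
    rw [hp, hmm]
    exact transpose_mulVec_sub_mulVec_transpose_mulVec hU a
  have ha : a = U₁ *ᵥ mm + √(p ⬝ᵥ p) • P := by
    rw [hPdef, sqrt_dotProduct_self_smul_inv_smul hp0, hp, add_sub_cancel]
  simp only [colVec_eq_replicateCol]
  refine ⟨?_, transpose_fromCols_mul_fromCols_eq_one hU ?_ ?_⟩
  · rw [fromCols_replicateCol_mul_fromBlocks_mul_fromBlocks, hH, ← ha]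
  · rw [← replicateCol_mulVec, hPdef, mulVec_smul, hUp, smul_zero, replicateCol_zero]
  · rw [transpose_replicateCol, replicateRow_mul_replicateCol, hPdef,
      dotProduct_inv_sqrt_smul_self hp0]
    ext
    rfl

/-- SVD rank-increasing update factorization.  With m = U₁ᵀa,
p = a − U₁m ≠ 0 and P = p/‖p‖₂, one has [H a] = [U₁ P] · K · W with
K = [[Σ, m],[0, ‖p‖₂]], W = [[V₁ᵀ, 0],[0, 1]], and [U₁ P] has orthonormal columns. -/
theorem svd_append_col_factorization {m n r : ℕ}
    (H : Matrix (Fin m) (Fin n) ℝ)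
    (U₁ : Matrix (Fin m) (Fin r) ℝ) (S : Matrix (Fin r) (Fin r) ℝ)
    (V₁ : Matrix (Fin n) (Fin r) ℝ)
    (hU : U₁ᵀ * U₁ = 1) (hV : V₁ᵀ * V₁ = 1)
    (hS : S.IsDiag) (hSpos : ∀ i, 0 < S i i)
    (hH : H = U₁ * S * V₁ᵀ)
    (a : Fin m → ℝ) (mm : Fin r → ℝ) (p : Fin m → ℝ) (P : Fin m → ℝ)
    (hmm : mm = U₁ᵀ *ᵥ a) (hp : p = a - U₁ *ᵥ mm) (hp0 : p ≠ 0)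
    (hPdef : P = (Real.sqrt (p ⬝ᵥ p))⁻¹ • p) :
    Matrix.fromCols H (colVec a) =
      Matrix.fromCols U₁ (colVec P) *
        fromBlocks S (colVec mm) 0 (Matrix.of fun _ _ => Real.sqrt (p ⬝ᵥ p) : Matrix Unit Unit ℝ) *
        fromBlocks V₁ᵀ 0 0 (1 : Matrix Unit Unit ℝ) ∧
    (Matrix.fromCols U₁ (colVec P))ᵀ * Matrix.fromCols U₁ (colVec P) = 1 :=
  svd_append_col_factorization_general H U₁ S V₁ hU hH a mm p P hmm hp hp0 hPdef
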